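/- Let P be a finite bounded poset with |P| > 1. The image Antb(P) of the blocker map is a meet-subsemilattice of the lattice Ant(P): if B₁, B₂ ∈ Antb(P), then B₁ ∧ B₂ (the meet in Ant(P), namely min(F(B₁) ∩ F(B₂))) also belongs to Antb(P); in fact B₁ ∧ B₂ = b(b(B₁) ∨ b(B₂)). -/

import Mathlib

open scoped Classical
open Set

/-- The order filter generated by a subset. -/
def upFilter (P : Type*) [Preorder P] (S : Set P) : Set P := {x | ∃ s ∈ S, s ≤ x}

/-- The set of minimal elements of a subset. -/
def minsOf (P : Type*) [Preorder P] (S : Set P) : Set P := {x | Minimal (· ∈ S) x}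

/-- The set of intersecters for `A` in `P`. -/
def inters (P : Type*) [PartialOrder P] [OrderBot P] (A : Set P) : Set P :=
  if A = ∅ then Set.univ
  else if A = {(⊥ : P)} then ∅
  else {b | ∀ a ∈ A, a ≠ ⊥ → ∃ z : P, IsAtom z ∧ z ≤ b ∧ z ≤ a}

/-- The set of complementers for `A` in `P`. -/
def compls (P : Type*) [PartialOrder P] [OrderBot P] (A : Set P) : Set P := (inters P A)ᶜ

/-- The blocker map: the set of minimal intersecters for `A` in `P`. -/
def bmap (P : Type*) [PartialOrder P] [OrderBot P] (A : Set P) : Set P := minsOf P (inters P A)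

/-!
On antichains, `inters` is the polar `K A = {b | ∀ a ∈ A, b and a share an atom}` of the
symmetric relation "share an atom"; the guards in `inters` are exactly what the polar does on
`∅` and `{⊥}`. Polars of a symmetric relation satisfy `K (S ∪ T) = K S ∩ K T` and `K K K = K`,
and in a finite poset `K` only sees minimal elements and every upper set is generated by its
minimal elements. Hence, for `Bᵢ = b(Aᵢ)`, both `min (F B₁ ∩ F B₂)` and `b (b B₁ ∨ b B₂)` equal
`min (K A₁ ∩ K A₂)`.
-/

section SharesAtom

variable {P : Type*} [PartialOrder P] [OrderBot P]

def SharesAtom (a b : P) : Prop := ∃ z, IsAtom z ∧ z ≤ a ∧ z ≤ b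

lemma sharesAtom_comm (a b : P) : SharesAtom a b ↔ SharesAtom b a :=
  exists_congr fun _ => and_congr_right' and_comm

lemma lowerPolar_sharesAtom : lowerPolar (SharesAtom (P := P)) = upperPolar SharesAtom := by
  funext S
  ext x
  exact forall₂_congr fun y _ => sharesAtom_comm x y

lemma upperPolar_sharesAtom_idem (S : Set P) :
    upperPolar SharesAtom (upperPolar SharesAtom (upperPolar SharesAtom S)) =
      upperPolar SharesAtom S := by
  simpa only [lowerPolar_sharesAtom] using upperPolar_lowerPolar_upperPolar (r := SharesAtom) S

lemma isUpperSet_upperPolar_sharesAtom (S : Set P) : IsUpperSet (upperPolar SharesAtom S) :=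
  fun _ _ hxy hx _ ha =>
    let ⟨z, hz, hza, hzx⟩ := hx ha
    ⟨z, hz, hza, hzx.trans hxy⟩

lemma upperPolar_sharesAtom_minsOf [WellFoundedLT P] (S : Set P) :
    upperPolar SharesAtom (minsOf P S) = upperPolar SharesAtom S := by
  refine (upperPolar_anti (r := SharesAtom) fun _ (hx : _ ∈ minsOf P S) => hx.1).antisymm'
    fun x hx a ha => ?_
  obtain ⟨m, hma, hm⟩ := exists_minimal_le_of_wellFoundedLT (· ∈ S) a ha
  obtain ⟨z, hz, hzm, hzx⟩ := hx hm
  exact ⟨z, hz, hzm.trans hma, hzx⟩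

lemma inters_eq_upperPolar_sharesAtom {A : Set P} (hA : IsAntichain (· ≤ ·) A) :
    inters P A = upperPolar SharesAtom A := by
  unfold inters
  split_ifs with h_empty h_bot
  · rw [h_empty, upperPolar_empty]
  · subst h_bot
    ext b
    simp only [mem_empty_iff_false, false_iff, mem_upperPolar_iff, mem_singleton_iff,
      forall_eq]
    rintro ⟨z, hz, hzb, -⟩
    exact hz.1 (le_bot_iff.mp hzb)
  · have hbot : ⊥ ∉ A := fun h => h_bot (hA.bot_mem_iff.mp h)
    ext b
    refine forall₂_congr fun a ha => ?_
    simp only [SharesAtom, and_comm (a := _ ≤ a)]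
    exact ⟨fun h => h (ne_of_mem_of_not_mem ha hbot), fun h _ => h⟩

end SharesAtom

section Blocker

variable {P : Type*} [PartialOrder P]

lemma isAntichain_minsOf (S : Set P) : IsAntichain (· ≤ ·) (minsOf P S) :=
  setOfPred_minimal_antichain _

lemma isAntichain_bmap [OrderBot P] (A : Set P) : IsAntichain (· ≤ ·) (bmap P A) :=
  isAntichain_minsOf _

lemma upFilter_minsOf [WellFoundedLT P] {U : Set P} (hU : IsUpperSet U) :
    upFilter P (minsOf P U) = U := by
  ext x
  refine ⟨fun ⟨s, hs, hsx⟩ => hU hsx hs.1, fun hx => ?_⟩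
  obtain ⟨m, hmx, hm⟩ := exists_minimal_le_of_wellFoundedLT (· ∈ U) x hx
  exact ⟨m, hm, hmx⟩

variable [OrderBot P]

lemma bmap_eq_minsOf_upperPolar {A : Set P} (hA : IsAntichain (· ≤ ·) A) :
    bmap P A = minsOf P (upperPolar SharesAtom A) := by
  rw [bmap, inters_eq_upperPolar_sharesAtom hA]

variable [WellFoundedLT P]

lemma upFilter_bmap {A : Set P} (hA : IsAntichain (· ≤ ·) A) :
    upFilter P (bmap P A) = upperPolar SharesAtom A := by
  rw [bmap_eq_minsOf_upperPolar hA, upFilter_minsOf (isUpperSet_upperPolar_sharesAtom A)]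

lemma upperPolar_bmap {A : Set P} (hA : IsAntichain (· ≤ ·) A) :
    upperPolar SharesAtom (bmap P A) = upperPolar SharesAtom (upperPolar SharesAtom A) := by
  rw [bmap_eq_minsOf_upperPolar hA, upperPolar_sharesAtom_minsOf]

lemma upperPolar_bmap_bmap {A : Set P} (hA : IsAntichain (· ≤ ·) A) :
    upperPolar SharesAtom (bmap P (bmap P A)) = upperPolar SharesAtom A := by
  rw [upperPolar_bmap (isAntichain_bmap A), upperPolar_bmap hA, upperPolar_sharesAtom_idem]

end Blocker

theorem stmt_16_general {P : Type*} [PartialOrder P] [BoundedOrder P] [Fintype P]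
    (B₁ B₂ : Set P)
    (h1 : ∃ A : Set P, IsAntichain (· ≤ ·) A ∧ bmap P A = B₁)
    (h2 : ∃ A : Set P, IsAntichain (· ≤ ·) A ∧ bmap P A = B₂) :
    (∃ A : Set P, IsAntichain (· ≤ ·) A ∧
      bmap P A = minsOf P (upFilter P B₁ ∩ upFilter P B₂)) ∧
    minsOf P (upFilter P B₁ ∩ upFilter P B₂) =
      bmap P (minsOf P (bmap P B₁ ∪ bmap P B₂)) := by
  obtain ⟨A₁, hA₁, rfl⟩ := h1
  obtain ⟨A₂, hA₂, rfl⟩ := h2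
  have hmeet : minsOf P (upFilter P (bmap P A₁) ∩ upFilter P (bmap P A₂)) =
      bmap P (minsOf P (bmap P (bmap P A₁) ∪ bmap P (bmap P A₂))) := by
    rw [bmap_eq_minsOf_upperPolar (isAntichain_minsOf _), upperPolar_sharesAtom_minsOf,
      upperPolar_union, upperPolar_bmap_bmap hA₁, upperPolar_bmap_bmap hA₂,
      upFilter_bmap hA₁, upFilter_bmap hA₂]
  exact ⟨⟨_, isAntichain_minsOf _, hmeet.symm⟩, hmeet⟩

theorem stmt_16 {P : Type*} [PartialOrder P] [BoundedOrder P] [Fintype P] [Nontrivial P]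
    (B₁ B₂ : Set P)
    (h1 : ∃ A : Set P, IsAntichain (· ≤ ·) A ∧ bmap P A = B₁)
    (h2 : ∃ A : Set P, IsAntichain (· ≤ ·) A ∧ bmap P A = B₂) :
    (∃ A : Set P, IsAntichain (· ≤ ·) A ∧
      bmap P A = minsOf P (upFilter P B₁ ∩ upFilter P B₂)) ∧
    minsOf P (upFilter P B₁ ∩ upFilter P B₂) =
      bmap P (minsOf P (bmap P B₁ ∪ bmap P B₂)) :=
  stmt_16_general B₁ B₂ h1 h2
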